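/- arXiv:2301.10844 — 3 statements merged into one kernel-verified Lean document; each statement's English description precedes it below -/
import Mathlib

section
/- For reals s, R, b, x with cosh²(s/2) = cosh(R), 0 < b ≤ s/2, and 0 < x < s, the inequality (cosh(b)·cosh(x) - cosh(R))/(sinh(b)·sinh(x)) > (cosh(R) - cosh(b)·cosh(s-x))/(sinh(b)·sinh(s-x)) is equivalent to cosh(s/2)·cosh(x - s/2) < cosh(b), and hence is false. -/
open Real

/-- Under the Bolza relation `cosh²(s/2) = cosh R`, with `0 < b ≤ s/2` and
`0 < x < s`, the Case III compatibility inequality is equivalent to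
`cosh(s/2)·cosh(x - s/2) < cosh b`, and hence is false. -/
theorem caseIII_incompatible (s R b x : ℝ)
    (hsR : (Real.cosh (s / 2)) ^ 2 = Real.cosh R)
    (hb : 0 < b) (hbs : b ≤ s / 2) (hx : 0 < x) (hxs : x < s) :
    ((Real.cosh b * Real.cosh x - Real.cosh R) / (Real.sinh b * Real.sinh x) >
        (Real.cosh R - Real.cosh b * Real.cosh (s - x)) / (Real.sinh b * Real.sinh (s - x))
      ↔ Real.cosh (s / 2) * Real.cosh (x - s / 2) < Real.cosh b) ∧
    ¬ ((Real.cosh b * Real.cosh x - Real.cosh R) / (Real.sinh b * Real.sinh x) >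
        (Real.cosh R - Real.cosh b * Real.cosh (s - x)) / (Real.sinh b * Real.sinh (s - x))) := by
  have hsb : 0 < Real.sinh b := Real.sinh_pos_iff.2 hb
  have hsx1 : 0 < Real.sinh x := Real.sinh_pos_iff.2 hx
  have hsx2 : 0 < Real.sinh (s - x) := Real.sinh_pos_iff.2 (by linarith)
  have hQ : 0 < Real.sinh (s / 2) := Real.sinh_pos_iff.2 (by linarith)
  have hP : 0 < Real.cosh (s / 2) := Real.cosh_pos _
  set P := Real.cosh (s / 2)
  set Q := Real.sinh (s / 2)
  set K := Real.cosh (x - s / 2)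
  set L := Real.sinh (x - s / 2)
  have hKL : K ^ 2 - L ^ 2 = 1 := Real.cosh_sq_sub_sinh_sq _
  have hBc : Real.cosh x = P * K + Q * L := by
    have := Real.cosh_add (s / 2) (x - s / 2)
    rw [show s / 2 + (x - s / 2) = x by ring] at this
    linarith
  have hCc : Real.cosh (s - x) = P * K - Q * L := by
    have := Real.cosh_sub (s / 2) (x - s / 2)
    rw [show s / 2 - (x - s / 2) = s - x by ring] at this
    linarith
  have hB : Real.sinh x = Q * K + P * L := by
    have := Real.sinh_add (s / 2) (x - s / 2)
    rw [show s / 2 + (x - s / 2) = x by ring] at this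
    linarith
  have hC : Real.sinh (s - x) = Q * K - P * L := by
    have := Real.sinh_sub (s / 2) (x - s / 2)
    rw [show s / 2 - (x - s / 2) = s - x by ring] at this
    linarith
  have hiff : ((Real.cosh b * Real.cosh x - Real.cosh R) / (Real.sinh b * Real.sinh x) >
        (Real.cosh R - Real.cosh b * Real.cosh (s - x)) / (Real.sinh b * Real.sinh (s - x))
      ↔ P * K < Real.cosh b) := by
    rw [gt_iff_lt, div_lt_div_iff₀ (by positivity) (by positivity)]
    have key : (Real.cosh b * Real.cosh x - Real.cosh R) * (Real.sinh b * Real.sinh (s - x)) -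
        (Real.cosh R - Real.cosh b * Real.cosh (s - x)) * (Real.sinh b * Real.sinh x) =
        2 * Real.sinh b * Q * P * (Real.cosh b - P * K) := by
      rw [hBc, hCc, hB, hC, ← hsR]
      linear_combination (2 * Real.sinh b * P * Q * Real.cosh b) * hKL
    constructor
    · intro h
      nlinarith [mul_pos (mul_pos hsb hQ) hP]
    · intro h
      nlinarith [mul_pos (mul_pos hsb hQ) hP]
  refine ⟨hiff, ?_⟩
  rw [hiff]
  have hcb : Real.cosh b ≤ P := by
    have : |b| ≤ |s / 2| := by
      rw [abs_of_pos hb, abs_of_pos (by linarith : (0:ℝ) < s / 2)]; exact hbs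
    exact Real.cosh_le_cosh.2 this
  have hK1 : 1 ≤ K := Real.one_le_cosh _
  nlinarith
end

section
/- For every integer g ≥ 2, letting R' = tanh(R/2) and s' = tanh(s/4) where cosh(R) = cot²(π/(4g)) and cosh²(s/2) = cosh(R), the inequality (cos φ − R'/s')/sin φ ≤ sin(π/(2g) − φ)/(cos(π/(2g) − φ) − R'/s') holds for all φ ∈ (0, π/(2g)). -/
open Real

lemma tanh_half_sq (x : ℝ) : Real.tanh (x/2)^2 = (Real.cosh x - 1)/(Real.cosh x + 1) := by
  have hc : Real.cosh x = 2 * Real.cosh (x/2)^2 - 1 := by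
    have := Real.cosh_two_mul (x/2)
    rw [show 2*(x/2) = x by ring] at this
    rw [Real.sinh_sq] at this; linarith
  have hc2 : 0 < Real.cosh (x/2) := Real.cosh_pos _
  rw [Real.tanh_eq_sinh_div_cosh, div_pow, Real.sinh_sq, hc]
  field_simp
  ring

lemma caseII_aux (β φ k : ℝ) (hβ0 : 0 < β) (hβ8 : β ≤ π/8)
    (hsβ : 0 < Real.sin β) (hcβ : 0 < Real.cos β)
    (hφ0 : 0 < φ) (hφ1 : φ < 2*β)
    (hkval : k = Real.cos β + Real.sin β) :
    (Real.cos φ - k) / Real.sin φ ≤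
      Real.sin (2*β - φ) / (Real.cos (2*β - φ) - k) := by
  have hpyth : Real.sin β ^ 2 + Real.cos β ^ 2 = 1 := Real.sin_sq_add_cos_sq β
  have hk1 : 1 < k := by
    rw [hkval]; nlinarith [mul_pos hsβ hcβ]
  have hφπ : φ < π := by nlinarith [pi_pos]
  have hsφ : 0 < Real.sin φ := Real.sin_pos_of_pos_of_lt_pi hφ0 hφπ
  have hprod : Real.cos φ * Real.cos (2*β - φ) - Real.sin φ * Real.sin (2*β - φ)
      = Real.cos (2*β) := by
    rw [← Real.cos_add]; ring_nf
  have hsum : Real.cos φ + Real.cos (2*β - φ) = 2 * Real.cos β * Real.cos (φ - β) := by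
    have := Real.cos_add_cos φ (2*β - φ)
    rw [show (φ + (2*β - φ))/2 = β by ring, show (φ - (2*β - φ))/2 = φ - β by ring] at this
    exact this
  have hc2β : Real.cos (2*β) = 2 * Real.cos β ^2 - 1 := Real.cos_two_mul β
  have hx1 : Real.cos (φ - β) ≤ 1 := Real.cos_le_one _
  have hid : (Real.cos φ - k) * (Real.cos (2*β - φ) - k) - Real.sin φ * Real.sin (2*β - φ)
      = 2 * Real.cos β * (Real.cos β + Real.sin β) * (1 - Real.cos (φ - β)) := by
    rw [hkval]
    linear_combination hprod - (Real.cos β + Real.sin β) * hsum + hc2β + hpyth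
  have hkey : Real.sin φ * Real.sin (2*β - φ) ≤
      (Real.cos φ - k) * (Real.cos (2*β - φ) - k) := by
    nlinarith [hid, mul_nonneg (mul_nonneg hcβ.le (by linarith : (0:ℝ) ≤ Real.cos β + Real.sin β))
      (sub_nonneg.mpr hx1)]
  have hD : Real.cos (2*β - φ) - k < 0 := by
    have := Real.cos_le_one (2*β - φ); linarith
  rw [← sub_nonneg]
  have hsub := div_sub_div (Real.sin (2*β - φ)) (Real.cos φ - k) hD.ne hsφ.ne'
  rw [hsub]
  apply div_nonneg_of_nonpos
  · nlinarith
  · nlinarith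

/-- First Case II trigonometric inequality: with `R' = tanh(R/2)`,
`s' = tanh(s/4)`, for all `φ ∈ (0, π/(2g))`,
`(cos φ − R'/s')/sin φ ≤ sin(π/(2g) − φ)/(cos(π/(2g) − φ) − R'/s')`. -/
theorem caseII_inequality_one (g : ℤ) (hg : 2 ≤ g) (R s : ℝ)
    (hR : 0 < R) (hs : 0 < s)
    (hcR : Real.cosh R = (Real.cot (π / (4 * g))) ^ 2)
    (hcs : (Real.cosh (s / 2)) ^ 2 = Real.cosh R)
    (φ : ℝ) (hφ0 : 0 < φ) (hφ1 : φ < π / (2 * g)) :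
    (Real.cos φ - Real.tanh (R / 2) / Real.tanh (s / 4)) / Real.sin φ ≤
      Real.sin (π / (2 * g) - φ) /
        (Real.cos (π / (2 * g) - φ) - Real.tanh (R / 2) / Real.tanh (s / 4)) := by
  have hgR : (2:ℝ) ≤ (g:ℝ) := by exact_mod_cast hg
  set β : ℝ := π / (4 * (g:ℝ)) with hβ
  have hg0 : (0:ℝ) < (g:ℝ) := by linarith
  have hβ0 : 0 < β := div_pos pi_pos (by linarith)
  have hβ8 : β ≤ π/8 := by
    rw [hβ]
    apply div_le_div_of_nonneg_left pi_pos.le (by norm_num)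
    linarith
  have hβ4 : β < π/4 := by nlinarith [pi_pos]
  have hα : π / (2 * (g:ℝ)) = 2 * β := by
    rw [hβ]; field_simp; ring
  -- basic trig positivity
  have hsβ : 0 < Real.sin β := Real.sin_pos_of_pos_of_lt_pi hβ0 (by nlinarith [pi_pos])
  have hcβ : 0 < Real.cos β := Real.cos_pos_of_mem_Ioo ⟨by linarith, by linarith [pi_pos]⟩
  have hcs4 : Real.sin β < Real.sin (π/4) := by
    apply Real.strictMonoOn_sin ⟨by linarith [pi_pos], by linarith [pi_pos]⟩
      ⟨by linarith [pi_pos], by linarith [pi_pos]⟩ hβ4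
  have hcc4 : Real.cos (π/4) < Real.cos β := by
    apply Real.strictAntiOn_cos ⟨by linarith [pi_pos], by linarith [pi_pos]⟩
      ⟨by linarith [pi_pos], by linarith [pi_pos]⟩ hβ4
  have hcgs : Real.sin β < Real.cos β := by
    rw [Real.cos_pi_div_four] at hcc4
    rw [Real.sin_pi_div_four] at hcs4
    linarith
  have hpyth : Real.sin β ^ 2 + Real.cos β ^ 2 = 1 := Real.sin_sq_add_cos_sq β
  -- values of tanh
  have hcotv : Real.cot β = Real.cos β / Real.sin β := Real.cot_eq_cos_div_sin β
  have hcoshR : Real.cosh R = (Real.cos β / Real.sin β)^2 := by rw [hcR, hcotv]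
  have htR : Real.tanh (R/2)^2 = Real.cos β ^2 - Real.sin β ^2 := by
    rw [tanh_half_sq, hcoshR]
    have h1 : Real.cos β / Real.sin β ≠ 0 := by positivity
    field_simp
    linear_combination (-(Real.cos β ^ 2 - Real.sin β ^ 2)) * hpyth
  have hcosh2 : Real.cosh (s/2) = Real.cos β / Real.sin β := by
    have h2 : (Real.cosh (s/2))^2 = (Real.cos β / Real.sin β)^2 := by rw [hcs, hcoshR]
    have h3 : (Real.cosh (s/2) - Real.cos β / Real.sin β) *
        (Real.cosh (s/2) + Real.cos β / Real.sin β) = 0 := by linear_combination h2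
    rcases mul_eq_zero.mp h3 with h | h
    · linarith
    · exfalso
      have h4 : 0 < Real.cos β / Real.sin β := by positivity
      linarith [Real.cosh_pos (s/2)]
  have hts : Real.tanh (s/4)^2 = (Real.cos β - Real.sin β)/(Real.cos β + Real.sin β) := by
    have := tanh_half_sq (s/2)
    rw [show s/2/2 = s/4 by ring, hcosh2] at this
    rw [this]
    field_simp
  -- k = cos β + sin β
  set k : ℝ := Real.tanh (R/2) / Real.tanh (s/4) with hk
  have htRpos : 0 < Real.tanh (R/2) := by
    rw [Real.tanh_eq_sinh_div_cosh]
    exact div_pos (Real.sinh_pos_iff.mpr (by linarith)) (Real.cosh_pos _)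
  have htspos : 0 < Real.tanh (s/4) := by
    rw [Real.tanh_eq_sinh_div_cosh]
    exact div_pos (Real.sinh_pos_iff.mpr (by linarith)) (Real.cosh_pos _)
  have hksq : k^2 = (Real.cos β + Real.sin β)^2 := by
    rw [hk, div_pow, htR, hts]
    have h1 : Real.cos β - Real.sin β ≠ 0 := by linarith
    have h2 : Real.cos β + Real.sin β ≠ 0 := by positivity
    field_simp
    ring
  have hkval : k = Real.cos β + Real.sin β := by
    have h3 : (k - (Real.cos β + Real.sin β)) * (k + (Real.cos β + Real.sin β)) = 0 := by
      linear_combination hksq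
    rcases mul_eq_zero.mp h3 with h | h
    · linarith
    · exfalso
      have hk0 : 0 < k := div_pos htRpos htspos
      nlinarith
  clear_value k β
  rw [hα] at hφ1 ⊢
  exact caseII_aux β φ k hβ0 hβ8 hsβ hcβ hφ0 hφ1 hkval
end

section
/- For every integer g ≥ 2, letting R' = tanh(R/2) and s' = tanh(s/4) with cosh(R) = cot²(π/(4g)) and cosh²(s/2) = cosh(R), the inequality (cos φ − R'·s')/sin φ ≥ sin(π/(2g) − φ)/(cos(π/(2g) − φ) − R'·s') holds for all φ ∈ (0, π/(2g)) for which both denominators are positive. -/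
open Real

set_option maxHeartbeats 1000000 in
/-- Second Case II trigonometric inequality: with `R' = tanh(R/2)`,
`s' = tanh(s/4)`, for all `φ ∈ (0, π/(2g))` for which both denominators are
positive, `(cos φ − R's')/sin φ ≥ sin(π/(2g) − φ)/(cos(π/(2g) − φ) − R's')`. -/
theorem caseII_inequality_two (g : ℤ) (hg : 2 ≤ g) (R s : ℝ)
    (hR : 0 < R) (hs : 0 < s)
    (hcR : Real.cosh R = (Real.cot (π / (4 * g))) ^ 2)
    (hcs : (Real.cosh (s / 2)) ^ 2 = Real.cosh R)
    (φ : ℝ) (hφ0 : 0 < φ) (hφ1 : φ < π / (2 * g))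
    (hden1 : 0 < Real.sin φ)
    (hden2 : 0 < Real.cos (π / (2 * g) - φ) - Real.tanh (R / 2) * Real.tanh (s / 4)) :
    (Real.cos φ - Real.tanh (R / 2) * Real.tanh (s / 4)) / Real.sin φ ≥
      Real.sin (π / (2 * g) - φ) /
        (Real.cos (π / (2 * g) - φ) - Real.tanh (R / 2) * Real.tanh (s / 4)) := by
  have hg2 : (2 : ℝ) ≤ (g : ℝ) := by exact_mod_cast hg
  have hgpos : (0 : ℝ) < (g : ℝ) := by linarith
  set θ : ℝ := π / (4 * g) with hθdef
  have hθ0 : 0 < θ := by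
    apply div_pos Real.pi_pos; linarith
  have hθ4 : θ < π / 4 := by
    rw [hθdef, div_lt_div_iff₀ (by linarith) (by norm_num)]
    have : (8 : ℝ) ≤ 4 * g := by linarith
    nlinarith [Real.pi_pos]
  have hθ2 : θ < π / 2 := by linarith [Real.pi_pos]
  have hsθ : 0 < Real.sin θ := Real.sin_pos_of_pos_of_lt_pi hθ0 (by linarith [Real.pi_pos])
  have hcθ : 0 < Real.cos θ := Real.cos_pos_of_mem_Ioo ⟨by linarith, hθ2⟩
  have hscθ : Real.sin θ < Real.cos θ := by
    have h1 : Real.sin θ < Real.sin (π / 4) :=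
      Real.sin_lt_sin_of_lt_of_le_pi_div_two (by linarith [Real.pi_pos]) (by linarith [Real.pi_pos]) hθ4
    have h2 : Real.cos (π / 4) < Real.cos θ :=
      Real.cos_lt_cos_of_nonneg_of_le_pi (le_of_lt hθ0) (by linarith [Real.pi_pos]) hθ4
    rw [Real.sin_pi_div_four] at h1
    rw [Real.cos_pi_div_four] at h2
    linarith
  have hpyθ : Real.sin θ ^ 2 + Real.cos θ ^ 2 = 1 := Real.sin_sq_add_cos_sq θ
  -- cosh R = (cos θ / sin θ)^2
  have hcR' : Real.cosh R = (Real.cos θ / Real.sin θ) ^ 2 := by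
    rw [hcR, Real.cot_eq_cos_div_sin]
  -- tanh(R/2)^2 = cos(2θ)
  have hcoshR2 : Real.cosh (R / 2) ^ 2 = (Real.cosh R + 1) / 2 := by
    have := Real.cosh_two_mul (R / 2)
    have h2 : Real.cosh (2 * (R / 2)) = Real.cosh R := by ring_nf
    have h3 := Real.cosh_sq (R / 2)
    rw [h2] at this
    linarith
  have hcoshR2pos : 0 < Real.cosh (R / 2) := Real.cosh_pos _
  have htR : Real.tanh (R / 2) ^ 2 = (Real.cosh R - 1) / (Real.cosh R + 1) := by
    rw [Real.tanh_eq_sinh_div_cosh, div_pow]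
    have h3 := Real.cosh_sq (R / 2)
    have hden : Real.cosh (R / 2) ^ 2 ≠ 0 := by positivity
    have hcRpos : (0:ℝ) < Real.cosh R + 1 := by nlinarith [Real.cosh_pos R]
    field_simp
    nlinarith [hcoshR2]
  have htRval : Real.tanh (R / 2) ^ 2 =
      (Real.cos θ - Real.sin θ) * (Real.cos θ + Real.sin θ) := by
    have hs2 : Real.sin θ ^ 2 ≠ 0 := by positivity
    have hBpos : (0:ℝ) < (Real.cos θ / Real.sin θ) ^ 2 + 1 := by positivity
    rw [htR, hcR', div_eq_iff hBpos.ne']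
    field_simp
    linear_combination (Real.sin θ ^ 2 - Real.cos θ ^ 2) * hpyθ
  -- cosh(s/2) = cos θ / sin θ
  have hcoshs2 : Real.cosh (s / 2) = Real.cos θ / Real.sin θ := by
    have h1 : Real.cosh (s / 2) ^ 2 = (Real.cos θ / Real.sin θ) ^ 2 := by rw [hcs, hcR']
    have h2 : 0 < Real.cosh (s / 2) := Real.cosh_pos _
    have h3 : 0 < Real.cos θ / Real.sin θ := div_pos hcθ hsθ
    have h4 : (Real.cosh (s / 2) - Real.cos θ / Real.sin θ) *
        (Real.cosh (s / 2) + Real.cos θ / Real.sin θ) = 0 := by linear_combination h1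
    rcases mul_eq_zero.1 h4 with h5 | h5
    · linarith
    · linarith
  have hcoshs4 : Real.cosh (s / 4) ^ 2 = (Real.cosh (s / 2) + 1) / 2 := by
    have := Real.cosh_two_mul (s / 4)
    have h2 : Real.cosh (2 * (s / 4)) = Real.cosh (s / 2) := by ring_nf
    have h3 := Real.cosh_sq (s / 4)
    rw [h2] at this
    linarith
  have hts : Real.tanh (s / 4) ^ 2 = (Real.cosh (s / 2) - 1) / (Real.cosh (s / 2) + 1) := by
    rw [Real.tanh_eq_sinh_div_cosh, div_pow]
    have h3 := Real.cosh_sq (s / 4)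
    have hden : Real.cosh (s / 4) ^ 2 ≠ 0 := by positivity
    have hcpos : (0:ℝ) < Real.cosh (s / 2) + 1 := by nlinarith [Real.cosh_pos (s / 2)]
    field_simp
    nlinarith [hcoshs4]
  have htsval : Real.tanh (s / 4) ^ 2 =
      (Real.cos θ - Real.sin θ) / (Real.cos θ + Real.sin θ) := by
    have hBpos : (0:ℝ) < Real.cos θ / Real.sin θ + 1 := by positivity
    have hcspos : (0:ℝ) < Real.cos θ + Real.sin θ := by linarith
    rw [hts, hcoshs2, div_eq_div_iff hBpos.ne' hcspos.ne']
    field_simp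
  -- the product equals cos θ - sin θ
  have hprod : Real.tanh (R / 2) * Real.tanh (s / 4) = Real.cos θ - Real.sin θ := by
    have hnn1 : 0 ≤ Real.tanh (R / 2) := by
      rw [Real.tanh_eq_sinh_div_cosh]
      exact div_nonneg (by positivity) (Real.cosh_pos _).le
    have hnn2 : 0 ≤ Real.tanh (s / 4) := by
      rw [Real.tanh_eq_sinh_div_cosh]
      exact div_nonneg (by positivity) (Real.cosh_pos _).le
    have hsq : (Real.tanh (R / 2) * Real.tanh (s / 4)) ^ 2 =
        (Real.cos θ - Real.sin θ) ^ 2 := by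
      rw [mul_pow, htRval, htsval]
      field_simp
    have hd : 0 ≤ Real.cos θ - Real.sin θ := by linarith
    nlinarith [mul_nonneg hnn1 hnn2]
  -- rewrite π/(2g) as 2θ
  have hα : π / (2 * g) = 2 * θ := by
    rw [hθdef]; field_simp; ring
  rw [hα] at hφ1 hden2 ⊢
  rw [hprod] at hden2 ⊢
  rw [ge_iff_le, div_le_div_iff₀ hden2 hden1]
  -- main inequality
  have hcos1 : Real.cos (φ - θ) ≤ 1 := Real.cos_le_one _
  rw [Real.cos_sub] at hcos1
  have hpyφ : Real.sin φ ^ 2 + Real.cos φ ^ 2 = 1 := Real.sin_sq_add_cos_sq φ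
  rw [Real.sin_sub, Real.cos_sub, Real.sin_two_mul, Real.cos_two_mul]
  nlinarith [mul_nonneg (mul_nonneg (sub_nonneg.2 hscθ.le) hcθ.le)
      (sub_nonneg.2 hcos1), hpyθ, hpyφ, sq_nonneg (Real.sin θ), sq_nonneg (Real.cos θ)]
end
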